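/- arXiv:0903.1379 — 2 statements merged into one kernel-verified Lean document; each statement's English description precedes it below -/
import Mathlib

section
/- For SNR > 0, the expectation E[log₂(1 + SNR·|H|²)], where |H|² is exponentially distributed with mean 1, equals log₂(e)·e^{1/SNR}·E₁(1/SNR), where E₁(ζ) = ∫₁^∞ t^{-1} e^{-ζt} dt is the exponential integral of order 1. -/
open MeasureTheory

/-- Exponential integral of order 1: `E₁ ζ = ∫₁^∞ t⁻¹ e^{-ζ t} dt`. -/
noncomputable def expInt (ζ : ℝ) : ℝ := ∫ t in Set.Ioi (1 : ℝ), t⁻¹ * Real.exp (-ζ * t)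

/-!
Integrating by parts against `e^{-x}` turns `log (1 + S x)` into `S / (1 + S x)`, the boundary
terms vanishing because `0 ≤ log (1 + S x) ≤ S x`. The substitution `t = 1 + S x` then gives
`∫₁^∞ t⁻¹ e^{-(t - 1)/S} dt = e^{1/S} E₁(1/S)`, and `log₂ = log₂ e · log` converts the base.
-/

open Set Real Filter Topology

theorem setIntegral_Ioi_comp_add_right {E : Type*} [NormedAddCommGroup E] [NormedSpace ℝ E]
    (f : ℝ → E) (a c : ℝ) :
    ∫ x in Ioi a, f (x + c) = ∫ x in Ioi (a + c), f x := by
  rw [← image_add_const_Ioi]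
  exact ((measurePreserving_add_right volume c).setIntegral_image_emb
    (measurableEmbedding_addRight c) f (Ioi a)).symm

theorem exp_mul_expInt (ζ : ℝ) :
    exp ζ * expInt ζ = ∫ u in Ioi 0, (u + 1)⁻¹ * exp (-ζ * u) := by
  rw [expInt, ← zero_add (1 : ℝ), ← setIntegral_Ioi_comp_add_right, ← integral_const_mul]
  congr 1 with u
  rw [mul_left_comm, ← exp_add]
  ring_nf

theorem logb_eq_logb_exp_one_mul_log (b y : ℝ) : logb b y = logb b (exp 1) * log y := by
  rw [logb, logb, log_exp]; ring

section

variable {S : ℝ}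

theorem norm_log_one_add_mul_mul_exp_neg_le (hS : 0 ≤ S) {x : ℝ} (hx : 0 ≤ x) :
    ‖log (1 + S * x) * exp (-x)‖ ≤ S * (x * exp (-x)) := by
  have hSx : 0 ≤ S * x := mul_nonneg hS hx
  have hlog_nonneg : 0 ≤ log (1 + S * x) := log_nonneg (by linarith)
  have hlog_le : log (1 + S * x) ≤ S * x := by
    linarith [log_le_sub_one_of_pos (show 0 < 1 + S * x by linarith)]
  rw [norm_mul, norm_of_nonneg hlog_nonneg, norm_of_nonneg (exp_pos _).le, ← mul_assoc]
  gcongr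

theorem integrableOn_log_one_add_mul_mul_exp_neg (hS : 0 ≤ S) :
    IntegrableOn (fun x => log (1 + S * x) * exp (-x)) (Ioi 0) := by
  have hdom : IntegrableOn (fun x : ℝ => S * (x * exp (-x))) (Ioi 0) := by
    have hΓ : IntegrableOn (fun x : ℝ => exp (-x) * x ^ ((2 : ℝ) - 1)) (Ioi 0) :=
      GammaIntegral_convergent (by norm_num)
    refine IntegrableOn.congr_fun (hΓ.const_mul S) (fun x _ => ?_) measurableSet_Ioi
    norm_num [mul_comm]
  refine hdom.mono' (by fun_prop) ?_
  filter_upwards [ae_restrict_mem measurableSet_Ioi] with x hx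
  exact norm_log_one_add_mul_mul_exp_neg_le hS hx.le

theorem integrableOn_div_one_add_mul_mul_exp_neg (hS : 0 ≤ S) :
    IntegrableOn (fun x => S / (1 + S * x) * exp (-x)) (Ioi 0) := by
  refine ((integrableOn_exp_neg_Ioi 0).const_mul S).mono' (by fun_prop) ?_
  filter_upwards [ae_restrict_mem measurableSet_Ioi] with x (hx : 0 < x)
  have h1 : 1 ≤ 1 + S * x := by nlinarith
  rw [norm_mul, norm_of_nonneg (div_nonneg hS (by linarith)), norm_of_nonneg (exp_pos _).le]
  gcongr
  exact div_le_self hS h1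

theorem integral_log_one_add_mul_mul_exp_neg (hS : 0 ≤ S) :
    ∫ x in Ioi 0, log (1 + S * x) * exp (-x) = ∫ x in Ioi 0, S / (1 + S * x) * exp (-x) := by
  have hu : ∀ x ∈ Ioi (0 : ℝ), HasDerivAt (fun x => log (1 + S * x)) (S / (1 + S * x)) x := by
    intro x (hx : 0 < x)
    have hlin : HasDerivAt (fun x => 1 + S * x) S x := by
      simpa using ((hasDerivAt_id x).const_mul S).const_add 1
    exact hlin.log (by nlinarith)
  have hv : ∀ x ∈ Ioi (0 : ℝ), HasDerivAt (fun x => -exp (-x)) (exp (-x)) x :=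
    fun x _ => ((hasDerivAt_neg' x).exp.neg).congr_deriv (by ring)
  have hbound : ∀ᶠ x in atTop, ‖log (1 + S * x) * -exp (-x)‖ ≤ S * (x ^ 1 * exp (-x)) := by
    filter_upwards [eventually_ge_atTop 0] with x hx
    simpa using norm_log_one_add_mul_mul_exp_neg_le hS hx
  have h_zero : Tendsto (fun x => log (1 + S * x) * -exp (-x)) (𝓝[>] 0) (𝓝 0) := by
    have : ContinuousAt (fun x => log (1 + S * x) * -exp (-x)) 0 := by
      fun_prop (disch := simp)
    simpa using this.tendsto.mono_left nhdsWithin_le_nhds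
  have h_infty : Tendsto (fun x => log (1 + S * x) * -exp (-x)) atTop (𝓝 0) := by
    refine squeeze_zero_norm' hbound ?_
    simpa using (tendsto_pow_mul_exp_neg_atTop_nhds_zero 1).const_mul S
  have := integral_Ioi_mul_deriv_eq_deriv_mul hu hv (integrableOn_log_one_add_mul_mul_exp_neg hS)
    (by simpa [Pi.mul_def, mul_neg] using (integrableOn_div_one_add_mul_mul_exp_neg hS).neg)
    h_zero h_infty
  simpa [mul_neg, integral_neg] using this

theorem integral_div_one_add_mul_mul_exp_neg (hS : 0 < S) :
    ∫ x in Ioi 0, S / (1 + S * x) * exp (-x) = exp (1 / S) * expInt (1 / S) := by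
  have hscale := integral_comp_mul_left_Ioi' (fun u => (u + 1)⁻¹ * exp (-(1 / S) * u)) 0 hS
  rw [mul_zero, smul_eq_mul, ← integral_const_mul] at hscale
  rw [exp_mul_expInt, ← hscale]
  congr 1 with x
  field_simp
  ring_nf

end

/-- For `SNR > 0`, the expectation `E[log₂(1 + SNR·|H|²)]` where `|H|²` is
exponentially distributed with mean 1 (density `e^{-x}` on `[0,∞)`) equals
`log₂(e) · e^{1/SNR} · E₁(1/SNR)`. -/
theorem rayleigh_capacity_closed_form (SNR : ℝ) (hSNR : 0 < SNR) :
    ∫ x in Set.Ioi (0 : ℝ), Real.logb 2 (1 + SNR * x) * Real.exp (-x)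
      = Real.logb 2 (Real.exp 1) * Real.exp (1 / SNR) * expInt (1 / SNR) := by
  calc ∫ x in Ioi 0, logb 2 (1 + SNR * x) * exp (-x)
      = logb 2 (exp 1) * ∫ x in Ioi 0, log (1 + SNR * x) * exp (-x) := by
        rw [← integral_const_mul]
        congr 1 with x
        rw [logb_eq_logb_exp_one_mul_log 2 (1 + SNR * x), mul_assoc]
    _ = logb 2 (exp 1) * ∫ x in Ioi 0, SNR / (1 + SNR * x) * exp (-x) := by
        rw [integral_log_one_add_mul_mul_exp_neg hSNR.le]
    _ = logb 2 (exp 1) * exp (1 / SNR) * expInt (1 / SNR) := by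
        rw [integral_div_one_add_mul_mul_exp_neg hSNR, mul_assoc]
end

section
/- For the Clarke–Jakes spectrum S_H(ν) = 1/(π√(f_D² − ν²)) on |ν| < f_D, assuming α·SNR < π·f_D, the quantity MMSE = 1 − ∫_{−f_D}^{f_D} SNR·S_H(ν)²/(1/α + SNR·S_H(ν)) dν equals 1 − arctanh(√(1 − (α·SNR/(π f_D))²)) / ((π/2)·√((π f_D/(α SNR))² − 1)). -/
open MeasureTheory

/-- Inverse hyperbolic tangent. -/
noncomputable def arctanh (x : ℝ) : ℝ := (1 / 2) * Real.log ((1 + x) / (1 - x))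

/-! With `w = √(f_D² - ν²)` and `c = α SNR` the integrand equals `(c / π) / (w (π w + c))`.
Put `a = π f_D` and `d = √(a² - c²)`. The function `(log p - log q) / d` with
`p, q = (f_D + w)(a + c) ± ν d` is a primitive of `1 / (w (π w + c))` that stays continuous at
`±f_D`, where the integrand blows up; since the integrand is nonnegative it is integrable and the
fundamental theorem of calculus gives `2 log ((a + c + d) / (a + c - d)) / d = 2 arctanh (d / a) / d`. -/

open Real Set

-- `r` and `e` play the roles of `f_D` and `a + c` above.
noncomputable def clarkePrimitive (r e d ν : ℝ) : ℝ :=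
  (log ((r + √(r ^ 2 - ν ^ 2)) * e + ν * d) - log ((r + √(r ^ 2 - ν ^ 2)) * e - ν * d)) / d

section ClarkePrimitive

variable {r e d w ν : ℝ}

lemma add_mul_sub_mul_pos (hr : 0 < r) (hν : |ν| ≤ r) (hw : 0 ≤ w) (hd : 0 ≤ d) (hde : d < e) :
    0 < (r + w) * e - ν * d := by
  have hνd : ν * d ≤ r * d := mul_le_mul_of_nonneg_right (le_of_abs_le hν) hd
  nlinarith

lemma add_mul_add_mul_pos (hr : 0 < r) (hν : |ν| ≤ r) (hw : 0 ≤ w) (hd : 0 ≤ d) (hde : d < e) :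
    0 < (r + w) * e + ν * d := by
  simpa using add_mul_sub_mul_pos hr ((abs_neg ν).trans_le hν) hw hd hde

lemma continuousOn_clarkePrimitive (hr : 0 < r) (hd : 0 ≤ d) (hde : d < e) :
    ContinuousOn (clarkePrimitive r e d) (Icc (-r) r) := by
  refine ContinuousOn.div_const (ContinuousOn.sub ?_ ?_) d
  · refine (Continuous.continuousOn (by fun_prop)).log fun ν hν => ?_
    exact (add_mul_add_mul_pos hr (abs_le.2 hν) (sqrt_nonneg _) hd hde).ne'
  · refine (Continuous.continuousOn (by fun_prop)).log fun ν hν => ?_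
    exact (add_mul_sub_mul_pos hr (abs_le.2 hν) (sqrt_nonneg _) hd hde).ne'

lemma hasDerivAt_sqrt_sq_sub_sq (hν : ν ^ 2 < r ^ 2) :
    HasDerivAt (fun x => √(r ^ 2 - x ^ 2)) (-ν / √(r ^ 2 - ν ^ 2)) ν := by
  have h := ((hasDerivAt_pow 2 ν).const_sub (r ^ 2)).sqrt (by linarith)
  convert h using 1
  field_simp
  ring

lemma lt_add_of_sq_eq_sq_sub_sq {a c : ℝ} (ha : 0 < a) (hc : 0 < c) (hd : d ^ 2 = a ^ 2 - c ^ 2) :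
    d < a + c := by
  nlinarith

variable {k c : ℝ}

lemma hasDerivAt_clarkePrimitive (hk : 0 < k) (hc : 0 < c) (hd0 : 0 < d)
    (hd : d ^ 2 = (k * r) ^ 2 - c ^ 2) (hν : ν ∈ Ioo (-r) r) :
    HasDerivAt (clarkePrimitive r (k * r + c) d)
      (1 / (√(r ^ 2 - ν ^ 2) * (k * √(r ^ 2 - ν ^ 2) + c))) ν := by
  have hr : 0 < r := by linarith [hν.1, hν.2]
  have hν2 : ν ^ 2 < r ^ 2 := sq_lt_sq' hν.1 hν.2
  have hw' := hasDerivAt_sqrt_sq_sub_sq hν2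
  set w := √(r ^ 2 - ν ^ 2)
  have hw : 0 < w := sqrt_pos.2 (by linarith)
  have hw2 : w ^ 2 = r ^ 2 - ν ^ 2 := sq_sqrt (by linarith)
  have hde : d < k * r + c := lt_add_of_sq_eq_sq_sub_sq (by positivity) hc hd
  have hp := add_mul_add_mul_pos hr (abs_le.2 ⟨hν.1.le, hν.2.le⟩) hw.le hd0.le hde
  have hq := add_mul_sub_mul_pos hr (abs_le.2 ⟨hν.1.le, hν.2.le⟩) hw.le hd0.le hde
  have hlogp : HasDerivAt (fun x => log ((r + √(r ^ 2 - x ^ 2)) * (k * r + c) + x * d))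
      ((-ν / w * (k * r + c) + d) / ((r + w) * (k * r + c) + ν * d)) ν := by
    simpa using ((((hasDerivAt_const ν r).add hw').mul_const (k * r + c)).add
      ((hasDerivAt_id ν).mul_const d)).log hp.ne'
  have hlogq : HasDerivAt (fun x => log ((r + √(r ^ 2 - x ^ 2)) * (k * r + c) - x * d))
      ((-ν / w * (k * r + c) - d) / ((r + w) * (k * r + c) - ν * d)) ν := by
    simpa using ((((hasDerivAt_const ν r).add hw').mul_const (k * r + c)).sub
      ((hasDerivAt_id ν).mul_const d)).log hq.ne'
  refine ((hlogp.sub hlogq).div_const d).congr_deriv ?_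
  -- `p q = 2 r (r + w) (k r + c) (k w + c)`, since `ν² = r² - w²` and `d² = (k r)² - c²`
  have hpq : ((r + w) * (k * r + c) + ν * d) * ((r + w) * (k * r + c) - ν * d)
      = 2 * r * (r + w) * (k * r + c) * (k * w + c) := by
    linear_combination (-(ν ^ 2)) * hd - ((k * r) ^ 2 - c ^ 2) * hw2
  rw [div_sub_div _ _ hp.ne' hq.ne', hpq]
  field_simp
  linear_combination 2 * (k * r + c) * d * hw2

end ClarkePrimitive

lemma setIntegral_Ioo_eq_sub_of_hasDerivAt_of_nonneg {f f' : ℝ → ℝ} {a b : ℝ} (hab : a ≤ b)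
    (hcont : ContinuousOn f (Icc a b)) (hderiv : ∀ x ∈ Ioo a b, HasDerivAt f (f' x) x)
    (hpos : ∀ x ∈ Ioo a b, 0 ≤ f' x) :
    ∫ x in Ioo a b, f' x = f b - f a := by
  rw [← integral_Ioc_eq_integral_Ioo, ← intervalIntegral.integral_of_le hab]
  refine intervalIntegral.integral_eq_sub_of_hasDerivAt_of_le hab hcont hderiv ?_
  exact (intervalIntegrable_iff_integrableOn_Ioc_of_le hab).2
    (intervalIntegral.integrableOn_deriv_of_nonneg hcont hderiv hpos)

lemma clarkePrimitive_sub {r e d : ℝ} (hr : 0 < r) (hd : 0 ≤ d) (hde : d < e) :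
    clarkePrimitive r e d r - clarkePrimitive r e d (-r) = 2 * log ((e + d) / (e - d)) / d := by
  have hpq : (r * e + r * d) / (r * e - r * d) = (e + d) / (e - d) := by
    rw [← mul_add, ← mul_sub, mul_div_mul_left _ _ hr.ne']
  simp only [clarkePrimitive, sub_self, neg_sq, sqrt_zero, add_zero, neg_mul, sub_neg_eq_add,
    ← sub_eq_add_neg]
  rw [← hpq, log_div (by nlinarith) (by nlinarith)]
  ring

lemma arctanh_div_eq_log {a c d : ℝ} (ha : 0 < a) (hc : 0 < c) (hd0 : 0 ≤ d)
    (hd : d ^ 2 = a ^ 2 - c ^ 2) :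
    arctanh (d / a) = log ((a + c + d) / (a + c - d)) := by
  have hda : d < a := by nlinarith
  -- `(a + c ± d)² = 2 (a + c) (a ± d)` because `c² + d² = a²`
  have hsq : (1 + d / a) / (1 - d / a) = ((a + c + d) / (a + c - d)) ^ 2 := by
    have : a - d ≠ 0 := by linarith
    have : a + c - d ≠ 0 := by linarith
    field_simp
    linear_combination 2 * d * hd
  rw [arctanh, hsq, log_pow]
  push_cast
  ring

lemma sqrt_one_sub_div_sq {a c : ℝ} (ha : 0 < a) :
    √(1 - (c / a) ^ 2) = √(a ^ 2 - c ^ 2) / a := by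
  rw [← sqrt_sq ha.le, ← sqrt_div' _ (sq_nonneg a), sqrt_sq ha.le]
  congr 1
  field_simp

theorem integral_inv_sqrt_sub_sq_mul_add {r k c : ℝ} (hk : 0 < k) (hc : 0 < c) (hcr : c < k * r) :
    ∫ ν in Ioo (-r) r, 1 / (√(r ^ 2 - ν ^ 2) * (k * √(r ^ 2 - ν ^ 2) + c))
      = 2 * arctanh (√(1 - (c / (k * r)) ^ 2)) / √((k * r) ^ 2 - c ^ 2) := by
  have hkr : 0 < k * r := hc.trans hcr
  have hr : 0 < r := pos_of_mul_pos_right hkr hk.le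
  set d := √((k * r) ^ 2 - c ^ 2)
  have hd : d ^ 2 = (k * r) ^ 2 - c ^ 2 := sq_sqrt (by nlinarith)
  have hd0 : 0 < d := sqrt_pos.2 (by nlinarith)
  have hde := lt_add_of_sq_eq_sq_sub_sq hkr hc hd
  rw [setIntegral_Ioo_eq_sub_of_hasDerivAt_of_nonneg (by linarith)
    (continuousOn_clarkePrimitive hr hd0.le hde)
    (fun ν hν => hasDerivAt_clarkePrimitive hk hc hd0 hd hν)
    (fun ν _ => by positivity), clarkePrimitive_sub hr hd0.le hde, sqrt_one_sub_div_sq hkr,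
    arctanh_div_eq_log hkr hc hd0.le hd]

lemma sqrt_div_sq_sub_one {a c : ℝ} (hc : 0 < c) :
    √((a / c) ^ 2 - 1) = √(a ^ 2 - c ^ 2) / c := by
  rw [← sqrt_sq hc.le, ← sqrt_div' _ (sq_nonneg c), sqrt_sq hc.le]
  congr 1
  field_simp

theorem mmse_clarke_jakes_general (fD α SNR : ℝ)
    (hα : 0 < α) (hSNR : 0 < SNR) (hsmall : α * SNR < Real.pi * fD) :
    let S : ℝ → ℝ := fun ν => 1 / (Real.pi * Real.sqrt (fD ^ 2 - ν ^ 2))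
    1 - (∫ ν in Set.Ioo (-fD) fD, SNR * (S ν) ^ 2 / (1 / α + SNR * S ν))
      = 1 - arctanh (Real.sqrt (1 - (α * SNR / (Real.pi * fD)) ^ 2))
          / ((Real.pi / 2) * Real.sqrt ((Real.pi * fD / (α * SNR)) ^ 2 - 1)) := by
  intro S
  have hc : 0 < α * SNR := mul_pos hα hSNR
  have hintegrand : EqOn (fun ν => SNR * S ν ^ 2 / (1 / α + SNR * S ν))
      (fun ν => α * SNR / π * (1 / (√(fD ^ 2 - ν ^ 2) * (π * √(fD ^ 2 - ν ^ 2) + α * SNR))))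
      (Ioo (-fD) fD) := by
    intro ν hν
    have hw : 0 < √(fD ^ 2 - ν ^ 2) := sqrt_pos.2 (by nlinarith [sq_lt_sq' hν.1 hν.2])
    simp only [S]
    field_simp
  rw [setIntegral_congr_fun measurableSet_Ioo hintegrand, integral_const_mul,
    integral_inv_sqrt_sub_sq_mul_add pi_pos hc hsmall, sqrt_div_sq_sub_one hc]
  have hd : 0 < √((π * fD) ^ 2 - (α * SNR) ^ 2) := sqrt_pos.2 (by nlinarith)
  field_simp

/-- Closed form of the MMSE for the Clarke–Jakes spectrum
`S_H(ν) = 1/(π √(f_D² − ν²))` on `|ν| < f_D`, assuming `α·SNR < π f_D`. -/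
theorem mmse_clarke_jakes (fD α SNR : ℝ) (hf : 0 < fD) (hf2 : fD < 1 / 2)
    (hα : 0 < α) (hSNR : 0 < SNR) (hsmall : α * SNR < Real.pi * fD) :
    let S : ℝ → ℝ := fun ν => 1 / (Real.pi * Real.sqrt (fD ^ 2 - ν ^ 2))
    1 - (∫ ν in Set.Ioo (-fD) fD, SNR * (S ν) ^ 2 / (1 / α + SNR * S ν))
      = 1 - arctanh (Real.sqrt (1 - (α * SNR / (Real.pi * fD)) ^ 2))
          / ((Real.pi / 2) * Real.sqrt ((Real.pi * fD / (α * SNR)) ^ 2 - 1)) :=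
  mmse_clarke_jakes_general fD α SNR hα hSNR hsmall
end
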